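/- arXiv:1510.02258 — 4 statements merged into one kernel-verified Lean document; each statement's English description precedes it below -/
import Mathlib

section
/- Let (A, E) be an exact category and X a full additive subcategory. If A →f B →g C is a conflation with f X-monic, and α : A → A' is any morphism, then in the pushout conflation A' →f' B' →g' C (obtained by pushing out along α) the inflation f' is again X-monic. Moreover, g' is X-epic whenever g is X-epic. -/
open CategoryTheory CategoryTheory.Limits

universe v u

/-- `f : A ⟶ B` is `X`-monic. -/
def XMonic {C : Type u} [Category.{v} C] (P : C → Prop) {A B : C}
    (f : A ⟶ B) : Prop :=
  ∀ (X' : C), P X' → ∀ (x : A ⟶ X'), ∃ t : B ⟶ X', f ≫ t = x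

/-- `g : B ⟶ C` is `X`-epic. -/
def XEpic {C : Type u} [Category.{v} C] (P : C → Prop) {A B : C}
    (f : A ⟶ B) : Prop :=
  ∀ (X' : C), P X' → ∀ (x : X' ⟶ B), ∃ t : X' ⟶ A, t ≫ f = x

section

variable {C : Type u} [Category.{v} C] {P : C → Prop}

theorem XMonic.of_isPushout {A B A' B' : C} {f : A ⟶ B} {α : A ⟶ A'} {β : B ⟶ B'}
    {f' : A' ⟶ B'} (hf : XMonic P f) (hpo : IsPushout f α β f') : XMonic P f' := by
  intro X' hX' x
  obtain ⟨t, ht⟩ := hf X' hX' (α ≫ x)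
  exact ⟨hpo.desc t x ht, hpo.inr_desc t x ht⟩

theorem XEpic.of_comp {A B D : C} {h : A ⟶ B} {k : B ⟶ D} (hhk : XEpic P (h ≫ k)) :
    XEpic P k := by
  intro X' hX' x
  obtain ⟨t, ht⟩ := hhk X' hX' x
  exact ⟨t ≫ h, by rw [Category.assoc, ht]⟩

end

theorem stmt_11_general {𝒜 : Type u} [Category.{v} 𝒜]
    (P : 𝒜 → Prop)
    {A B C A' B' : 𝒜}
    (f : A ⟶ B) (g : B ⟶ C) (hf : XMonic P f)
    (α : A ⟶ A') (f' : A' ⟶ B') (β : B ⟶ B') (g' : B' ⟶ C)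
    (hpo : IsPushout f α β f')
    (hg : g = β ≫ g') :
    XMonic P f' ∧ (XEpic P g → XEpic P g') := by
  subst hg
  exact ⟨hf.of_isPushout hpo, XEpic.of_comp⟩

theorem stmt_11 {𝒜 : Type u} [Category.{v} 𝒜] [Preadditive 𝒜]
    (P : 𝒜 → Prop)
    {A B C A' B' : 𝒜}
    (f : A ⟶ B) (g : B ⟶ C) (hf : XMonic P f)
    (α : A ⟶ A') (f' : A' ⟶ B') (β : B ⟶ B') (g' : B' ⟶ C)
    (hpo : IsPushout f α β f')
    (hg : g = β ≫ g') :
    XMonic P f' ∧ (XEpic P g → XEpic P g') :=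
  stmt_11_general P f g hf α f' β g' hpo hg
end

section
/- Let (A, E) be an exact category and X a full additive subcategory. Suppose A →f B →l C' and B →g C →h A' are X-complete conflations (f, g X-monic and l, h X-epic). Then g ∘ f is an inflation, and the resulting conflation A →g∘f C →k B' is also X-complete. -/
/-!
By the axioms `f ≫ g` is an inflation, say with cokernel `p : C ⟶ Z`, and `X`-monics compose.
Push the conflation `B ⟶ C ⟶ A'` out along `l`: the leg `b : C ⟶ Q` is again a cokernel of
`f ≫ g`, so `b ≅ p`, and the other leg `g' : C' ⟶ Q` is an inflation which is a kernel of the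
induced `s : Q ⟶ A'` (Noether). Given `x : X' ⟶ Q`, lift `x ≫ s` along the `X`-epic `b ≫ s = h`
to `t`; then `x - t ≫ b` dies in `A'`, so it factors through `g'`, and, `l` being `X`-epic,
through `l ≫ g' = g ≫ b`. Hence `b`, and with it `p`, is `X`-epic.
-/

open CategoryTheory CategoryTheory.Limits

universe v u

/-- A Quillen exact structure on an additive category, recorded by its class of
conflations (kernel-cokernel pairs), together with the closure axioms. -/
structure ExactStructure (𝒜 : Type u) [Category.{v} 𝒜] [Preadditive 𝒜] where
  /-- the class of conflations -/
  IsConflation : ∀ {A B C : 𝒜}, (A ⟶ B) → (B ⟶ C) → Prop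
  comp_zero : ∀ {A B C : 𝒜} (f : A ⟶ B) (g : B ⟶ C),
    IsConflation f g → f ≫ g = 0
  isKernel : ∀ {A B C : 𝒜} (f : A ⟶ B) (g : B ⟶ C) (h : IsConflation f g),
    Nonempty (IsLimit (KernelFork.ofι f (comp_zero f g h)))
  isCokernel : ∀ {A B C : 𝒜} (f : A ⟶ B) (g : B ⟶ C) (h : IsConflation f g),
    Nonempty (IsColimit (CokernelCofork.ofπ g (comp_zero f g h)))
  infl_comp : ∀ {A B C : 𝒜} (f : A ⟶ B) (g : B ⟶ C),
    (∃ (Z : 𝒜) (p : B ⟶ Z), IsConflation f p) →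
    (∃ (Z : 𝒜) (p : C ⟶ Z), IsConflation g p) →
    ∃ (Z : 𝒜) (p : C ⟶ Z), IsConflation (f ≫ g) p
  defl_comp : ∀ {A B C : 𝒜} (f : A ⟶ B) (g : B ⟶ C),
    (∃ (Z : 𝒜) (i : Z ⟶ A), IsConflation i f) →
    (∃ (Z : 𝒜) (i : Z ⟶ B), IsConflation i g) →
    ∃ (Z : 𝒜) (i : Z ⟶ A), IsConflation i (f ≫ g)
  pushout : ∀ {A B A' : 𝒜} (f : A ⟶ B) (a : A ⟶ A'),
    (∃ (Z : 𝒜) (p : B ⟶ Z), IsConflation f p) →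
    ∃ (B' : 𝒜) (f' : A' ⟶ B') (b : B ⟶ B'),
      IsPushout f a b f' ∧ ∃ (Z : 𝒜) (p : B' ⟶ Z), IsConflation f' p
  pullback : ∀ {B C B' : 𝒜} (g : B ⟶ C) (c : B' ⟶ C),
    (∃ (Z : 𝒜) (i : Z ⟶ B), IsConflation i g) →
    ∃ (A' : 𝒜) (g' : A' ⟶ B') (b : A' ⟶ B),
      IsPullback g' b c g ∧ ∃ (Z : 𝒜) (i : Z ⟶ A'), IsConflation i g'

section XMaps

variable {𝒞 : Type u} [Category.{v} 𝒞] {P : 𝒞 → Prop}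

theorem XMonic.comp {A B D : 𝒞} {f : A ⟶ B} {g : B ⟶ D} (hf : XMonic P f)
    (hg : XMonic P g) : XMonic P (f ≫ g) := by
  intro X' hX x
  obtain ⟨t, rfl⟩ := hf X' hX x
  obtain ⟨u, rfl⟩ := hg X' hX t
  exact ⟨u, Category.assoc _ _ _⟩

theorem XEpic.comp {A B D : 𝒞} {f : A ⟶ B} {g : B ⟶ D} (hf : XEpic P f)
    (hg : XEpic P g) : XEpic P (f ≫ g) := by
  intro X' hX x
  obtain ⟨t, rfl⟩ := hg X' hX x
  obtain ⟨u, rfl⟩ := hf X' hX t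
  exact ⟨u, (Category.assoc _ _ _).symm⟩

theorem XEpic.of_isSplitEpi {A B : 𝒞} (f : A ⟶ B) [IsSplitEpi f] : XEpic P f :=
  fun _ _ x => ⟨x ≫ section_ f, by simp⟩

theorem XEpic.of_comp_of_exists_lift [Preadditive 𝒞] {A B D : 𝒞} {p : A ⟶ B} {s : B ⟶ D}
    (hps : XEpic P (p ≫ s))
    (hlift : ∀ X', P X' → ∀ y : X' ⟶ B, y ≫ s = 0 → ∃ v : X' ⟶ A, v ≫ p = y) :
    XEpic P p := by
  intro X' hX x
  obtain ⟨t, ht⟩ := hps X' hX (x ≫ s)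
  obtain ⟨v, hv⟩ := hlift X' hX (x - t ≫ p) (by simp [ht])
  exact ⟨t + v, by rw [Preadditive.add_comp, hv, add_sub_cancel]⟩
end XMaps

section Pushout

variable {𝒜 : Type u} [Category.{v} 𝒜] [Preadditive 𝒜]

noncomputable def CategoryTheory.IsPushout.isColimitCokernelCoforkComp {A B C C' Q : 𝒜}
    {f : A ⟶ B} {l : B ⟶ C'} {g : B ⟶ C} {b : C ⟶ Q} {g' : C' ⟶ Q} {hfl : f ≫ l = 0}
    (hl : IsColimit (CokernelCofork.ofπ l hfl)) (hpo : IsPushout g l b g') :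
    IsColimit (CokernelCofork.ofπ (f := f ≫ g) b
      (by rw [Category.assoc, hpo.w, ← Category.assoc, hfl, zero_comp])) :=
  letI : NormalEpi l := ⟨A, f, hfl, hl⟩
  (normalOfIsPushoutSndOfNormal hpo.w hpo.isColimit).isColimit

variable (E : ExactStructure 𝒜) {B C C' A' Q : 𝒜} {g : B ⟶ C} {h : C ⟶ A'} {l : B ⟶ C'}
  {b : C ⟶ Q} {g' : C' ⟶ Q}

/-- Noether: pushing the conflation `(g, h)` out along `l`, the new inflation `g'` is a kernel of
the map `s` induced by `h`, because the cokernel of `g'` factors through `s`. -/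
theorem ExactStructure.exists_lift_of_isPushout (hgh : E.IsConflation g h)
    (hpo : IsPushout g l b g') (hg' : ∃ (Z : 𝒜) (q : Q ⟶ Z), E.IsConflation g' q)
    {s : Q ⟶ A'} (hbs : b ≫ s = h) (hg's : g' ≫ s = 0) {W : 𝒜} (y : W ⟶ Q)
    (hy : y ≫ s = 0) : ∃ w : W ⟶ C', w ≫ g' = y := by
  obtain ⟨Z, q, hq⟩ := hg'
  have hg'q := E.comp_zero g' q hq
  obtain ⟨ψ, hψ⟩ : ∃ ψ : A' ⟶ Z, h ≫ ψ = b ≫ q :=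
    ⟨_, (CokernelCofork.IsColimit.desc' (E.isCokernel g h hgh).some (b ≫ q)
      (by rw [← Category.assoc, hpo.w, Category.assoc, hg'q, Limits.comp_zero])).2⟩
  have hsψ : s ≫ ψ = q := hpo.hom_ext (by rw [← Category.assoc, hbs, hψ])
    (by rw [← Category.assoc, hg's, zero_comp, hg'q])
  exact ⟨_, (KernelFork.IsLimit.lift' (E.isKernel g' q hq).some y
    (by rw [← hsψ, ← Category.assoc, hy, zero_comp])).2⟩

theorem XEpic.of_isPushout {P : 𝒜 → Prop} (hgh : E.IsConflation g h)
    (hpo : IsPushout g l b g') (hg' : ∃ (Z : 𝒜) (q : Q ⟶ Z), E.IsConflation g' q)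
    (hh : XEpic P h) (hl : XEpic P l) : XEpic P b := by
  let s : Q ⟶ A' := hpo.desc h 0 (by rw [E.comp_zero g h hgh, comp_zero])
  have hbs : b ≫ s = h := hpo.inl_desc _ _ _
  refine XEpic.of_comp_of_exists_lift (s := s) (hbs ▸ hh) fun X' hX y hy => ?_
  obtain ⟨w, rfl⟩ := E.exists_lift_of_isPushout hgh hpo hg' hbs (hpo.inr_desc _ _ _) y hy
  obtain ⟨v, rfl⟩ := hl X' hX w
  exact ⟨v ≫ g, by rw [Category.assoc, Category.assoc, hpo.w]⟩

end Pushout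

theorem stmt_12 {𝒜 : Type u} [Category.{v} 𝒜] [Preadditive 𝒜]
    (E : ExactStructure 𝒜) (P : 𝒜 → Prop)
    {A B C C' A' : 𝒜}
    (f : A ⟶ B) (l : B ⟶ C') (g : B ⟶ C) (h : C ⟶ A')
    (h₁ : E.IsConflation f l) (h₂ : E.IsConflation g h)
    (hf : XMonic P f) (hl : XEpic P l) (hg : XMonic P g) (hh : XEpic P h) :
    ∃ (B' : 𝒜) (k : C ⟶ B'),
      E.IsConflation (f ≫ g) k ∧ XMonic P (f ≫ g) ∧ XEpic P k := by
  obtain ⟨Z, p, hfgp⟩ := E.infl_comp f g ⟨C', l, h₁⟩ ⟨A', h, h₂⟩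
  obtain ⟨Q, g', b, hpo, hg'⟩ := E.pushout g l ⟨A', h, h₂⟩
  have hb : XEpic P b := XEpic.of_isPushout E h₂ hpo hg' hh hl
  let e : Q ≅ Z := IsColimit.coconePointUniqueUpToIso
    (hpo.isColimitCokernelCoforkComp (E.isCokernel f l h₁).some) (E.isCokernel _ p hfgp).some
  have hbe : b ≫ e.hom = p :=
    IsColimit.comp_coconePointUniqueUpToIso_hom (s := CokernelCofork.ofπ b _) _ _ .one
  exact ⟨Z, p, hfgp, hf.comp hg, hbe ▸ hb.comp (XEpic.of_isSplitEpi e.hom)⟩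
end

section
/- Let (A, E) be an exact category and X a full additive subcategory such that for every object A there exist conflations X₁ → X₀ →p A with p an X-precover and X₁ ∈ X, and A →i X⁰ → X¹ with i an X-preenvelope and X¹ ∈ X. Then every morphism in the stable category A/X has a kernel and a cokernel; i.e., A/X is preabelian. -/
open CategoryTheory CategoryTheory.Limits

universe v u

/-- The stable equivalence relation modulo the subcategory `P`. -/
def stableRel {C : Type u} [Category.{v} C] [Preadditive C] (P : C → Prop) :
    HomRel C :=
  fun {A B} f g => ∃ (X : C), P X ∧ ∃ (v : A ⟶ X) (u : X ⟶ B), f - g = v ≫ u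

/-!
Because `X` is closed under `⊞`, the morphisms factoring through `X` form an ideal, so `𝒜/X` is
preadditive. Given `f : A ⟶ B`, pull back a deflation `p : X₀ ⟶ B` which is an `X`-precover with
kernel `k : X₁ ⟶ X₀`, `X₁ ∈ X`, along `f`; call the resulting map `g' : D ⟶ A`. Its image in
`𝒜/X` is a kernel of the image of `f`: `g' ≫ f = b ≫ p` factors through `X₀`; `g'` is `X`-epic
as a pullback of an `X`-epic, which lets one lift maps killed by `f` modulo `X`; and if `h ≫ g'`
factors through `X`, then `h` is congruent modulo `X` to a map killed by `g'`, which factors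
through the kernel `X₁` of `g'`. Cokernels are dual, pushing out an `X`-preenvelope inflation.
-/

namespace CategoryTheory

variable {C : Type u} [Category.{v} C] {P : C → Prop}

lemma IsPullback.xEpic_fst {D A X₀ B : C} {g' : D ⟶ A} {b : D ⟶ X₀} {f : A ⟶ B}
    {p : X₀ ⟶ B} (hpb : IsPullback g' b f p) (hp : XEpic P p) : XEpic P g' := by
  intro X hX x
  obtain ⟨t, ht⟩ := hp X hX (x ≫ f)
  exact ⟨hpb.lift x t ht.symm, hpb.lift_fst _ _ _⟩

lemma IsPushout.xMonic_inr {A X₀ B Q : C} {i : A ⟶ X₀} {f : A ⟶ B} {b : X₀ ⟶ Q}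
    {j : B ⟶ Q} (hpo : IsPushout i f b j) (hi : XMonic P i) : XMonic P j := by
  intro X hX x
  obtain ⟨t, ht⟩ := hi X hX (f ≫ x)
  exact ⟨hpo.desc t x ht, hpo.inr_desc _ _ _⟩

section Preadditive

variable [Preadditive C]

def HomRel.IsAdditive (r : HomRel C) : Prop :=
  ∀ ⦃X Y : C⦄ (f₁ f₂ g₁ g₂ : X ⟶ Y), r f₁ f₂ → r g₁ g₂ → r (f₁ + g₁) (f₂ + g₂)

structure HomRel.IsKernelModulo (r : HomRel C) {D A B : C} (f : A ⟶ B) (ι : D ⟶ A) :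
    Prop where
  comp_rel_zero : r (ι ≫ f) 0
  exists_lift : ∀ ⦃W : C⦄ (g : W ⟶ A), r (g ≫ f) 0 → ∃ h : W ⟶ D, r (h ≫ ι) g
  rel_zero_of_comp : ∀ ⦃W : C⦄ (h : W ⟶ D), r (h ≫ ι) 0 → r h 0

structure HomRel.IsCokernelModulo (r : HomRel C) {A B Q : C} (f : A ⟶ B) (π : B ⟶ Q) :
    Prop where
  comp_rel_zero : r (f ≫ π) 0
  exists_desc : ∀ ⦃T : C⦄ (g : B ⟶ T), r (f ≫ g) 0 → ∃ h : Q ⟶ T, r (π ≫ h) g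
  rel_zero_of_comp : ∀ ⦃T : C⦄ (h : Q ⟶ T), r (π ≫ h) 0 → r h 0

namespace Quotient

variable {r : HomRel C} [Congruence r] (hr : r.IsAdditive)

lemma functor_map_eq_zero_iff {X Y : C} (g : X ⟶ Y) :
    letI := preadditive r hr
    (functor r).map g = 0 ↔ r g 0 :=
  functor_map_eq_iff r g 0

lemma hasKernel_functor_map {D A B : C} {f : A ⟶ B} {ι : D ⟶ A}
    (hι : r.IsKernelModulo f ι) :
    letI := preadditive r hr
    HasKernel ((functor r).map f) := by
  let := preadditive r hr
  have : Mono ((functor r).map ι) := by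
    refine Preadditive.mono_of_cancel_zero _ fun {W} χ hχ => ?_
    obtain ⟨g, rfl⟩ := (functor r).map_surjective (X := W.as) χ
    rw [← Functor.map_comp, functor_map_eq_zero_iff hr] at hχ
    exact (functor_map_eq_zero_iff hr g).2 (hι.rel_zero_of_comp g hχ)
  have lift : ∀ {W : Quotient r} (χ : W ⟶ (functor r).obj A), χ ≫ (functor r).map f = 0 →
      ∃ l, l ≫ (functor r).map ι = χ := by
    intro W χ hχ
    obtain ⟨g, rfl⟩ := (functor r).map_surjective (X := W.as) χ
    rw [← Functor.map_comp, functor_map_eq_zero_iff hr] at hχ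
    obtain ⟨h, hh⟩ := hι.exists_lift g hχ
    exact ⟨(functor r).map h, by rw [← Functor.map_comp]; exact Quotient.sound r hh⟩
  refine HasLimit.mk ⟨_, KernelFork.IsLimit.ofι' ((functor r).map ι) ?_
    fun χ hχ => ⟨_, (lift χ hχ).choose_spec⟩⟩
  rw [← Functor.map_comp, functor_map_eq_zero_iff hr]
  exact hι.comp_rel_zero

lemma hasCokernel_functor_map {A B Q : C} {f : A ⟶ B} {π : B ⟶ Q}
    (hπ : r.IsCokernelModulo f π) :
    letI := preadditive r hr
    HasCokernel ((functor r).map f) := by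
  let := preadditive r hr
  have : Epi ((functor r).map π) := by
    refine Preadditive.epi_of_cancel_zero _ fun {T} χ hχ => ?_
    obtain ⟨g, rfl⟩ := (functor r).map_surjective (Y := T.as) χ
    rw [← Functor.map_comp, functor_map_eq_zero_iff hr] at hχ
    exact (functor_map_eq_zero_iff hr g).2 (hπ.rel_zero_of_comp g hχ)
  have desc : ∀ {T : Quotient r} (χ : (functor r).obj B ⟶ T), (functor r).map f ≫ χ = 0 →
      ∃ l, (functor r).map π ≫ l = χ := by
    intro T χ hχ
    obtain ⟨g, rfl⟩ := (functor r).map_surjective (Y := T.as) χ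
    rw [← Functor.map_comp, functor_map_eq_zero_iff hr] at hχ
    obtain ⟨h, hh⟩ := hπ.exists_desc g hχ
    exact ⟨(functor r).map h, by rw [← Functor.map_comp]; exact Quotient.sound r hh⟩
  refine HasColimit.mk ⟨_, CokernelCofork.IsColimit.ofπ' ((functor r).map π) ?_
    fun χ hχ => ⟨_, (desc χ hχ).choose_spec⟩⟩
  rw [← Functor.map_comp, functor_map_eq_zero_iff hr]
  exact hπ.comp_rel_zero

end Quotient

end Preadditive

end CategoryTheory

section StableRel

variable {𝒜 : Type u} [Category.{v} 𝒜] [Preadditive 𝒜] {P : 𝒜 → Prop}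

lemma stableRel_iff_sub_rel_zero {A B : 𝒜} {f g : A ⟶ B} :
    stableRel P f g ↔ stableRel P (f - g) 0 := by
  simp only [stableRel, sub_zero]

lemma stableRel_comp_zero {A X B : 𝒜} (hX : P X) (v : A ⟶ X) (u : X ⟶ B) :
    stableRel P (v ≫ u) 0 :=
  ⟨X, hX, v, u, sub_zero _⟩

lemma stableRel_refl_of_mem {X : 𝒜} (hX : P X) {A B : 𝒜} (f : A ⟶ B) : stableRel P f f :=
  ⟨X, hX, 0, 0, by simp⟩

lemma stableRel_zero_neg {A B : 𝒜} {f : A ⟶ B} (hf : stableRel P f 0) :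
    stableRel P (-f) 0 := by
  obtain ⟨X, hX, v, u, e⟩ := hf
  exact ⟨X, hX, -v, u, by simp only [sub_zero] at e ⊢; simp [e]⟩

lemma stableRel_zero_comp_left {W A B : 𝒜} (g : W ⟶ A) {f : A ⟶ B} (hf : stableRel P f 0) :
    stableRel P (g ≫ f) 0 := by
  obtain ⟨X, hX, v, u, e⟩ := hf
  exact ⟨X, hX, g ≫ v, u, by simp only [sub_zero] at e ⊢; simp [e]⟩

lemma stableRel_zero_comp_right {A B T : 𝒜} {f : A ⟶ B} (hf : stableRel P f 0) (g : B ⟶ T) :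
    stableRel P (f ≫ g) 0 := by
  obtain ⟨X, hX, v, u, e⟩ := hf
  exact ⟨X, hX, v, u ≫ g, by simp only [sub_zero] at e ⊢; simp [e]⟩


lemma stableRel_zero_of_comp_eq_zero_of_isPullback {X₁ X₀ A B D W : 𝒜} {k : X₁ ⟶ X₀}
    {p : X₀ ⟶ B} {w : k ≫ p = 0} (hk : IsLimit (KernelFork.ofι k w)) (hX₁ : P X₁)
    {f : A ⟶ B} {g' : D ⟶ A} {b : D ⟶ X₀} (hpb : IsPullback g' b f p) {x : W ⟶ D}
    (hx : x ≫ g' = 0) : stableRel P x 0 := by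
  obtain ⟨s, hs⟩ := KernelFork.IsLimit.lift' hk (x ≫ b)
    (by rw [Category.assoc, ← hpb.w, ← Category.assoc, hx, zero_comp])
  refine ⟨X₁, hX₁, s, hpb.lift 0 k (by simp [w]), ?_⟩
  apply hpb.hom_ext <;> simp_all

lemma stableRel_zero_of_comp_eq_zero_of_isPushout {A B X₀ X₁ Q W : 𝒜} {i : A ⟶ X₀}
    {c : X₀ ⟶ X₁} {w : i ≫ c = 0} (hc : IsColimit (CokernelCofork.ofπ c w)) (hX₁ : P X₁)
    {f : A ⟶ B} {b : X₀ ⟶ Q} {j : B ⟶ Q} (hpo : IsPushout i f b j) {x : Q ⟶ W}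
    (hx : j ≫ x = 0) : stableRel P x 0 := by
  obtain ⟨s, hs⟩ := CokernelCofork.IsColimit.desc' hc (b ≫ x)
    (by rw [← Category.assoc, hpo.w, Category.assoc, hx, comp_zero])
  refine ⟨X₁, hX₁, hpo.desc c 0 (by simp [w]), s, ?_⟩
  apply hpo.hom_ext <;> simp_all

variable [HasBinaryBiproducts 𝒜] (hsum : ∀ X Y : 𝒜, P X → P Y → P (X ⊞ Y))
include hsum

lemma stableRel_zero_add {A B : 𝒜} {f g : A ⟶ B} (hf : stableRel P f 0) (hg : stableRel P g 0) :
    stableRel P (f + g) 0 := by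
  obtain ⟨X, hX, v, u, e⟩ := hf
  obtain ⟨Y, hY, v', u', e'⟩ := hg
  exact ⟨X ⊞ Y, hsum X Y hX hY, biprod.lift v v', biprod.desc u u',
    by simp only [sub_zero] at e e' ⊢; simp [e, e']⟩

lemma stableRel_isAdditive : (stableRel P).IsAdditive := by
  intro A B f₁ f₂ g₁ g₂ hf hg
  rw [stableRel_iff_sub_rel_zero] at hf hg ⊢
  convert stableRel_zero_add hsum hf hg using 1
  abel

lemma congruence_stableRel (hP : 𝒜 → ∃ X, P X) : Congruence (stableRel P) where
  equivalence {A _} :=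
    { refl f := (hP A).elim fun _ hX => stableRel_refl_of_mem hX f
      symm := fun {f g} h => by
        rw [stableRel_iff_sub_rel_zero] at h ⊢
        simpa using stableRel_zero_neg h
      trans := fun {f g h} hfg hgh => by
        rw [stableRel_iff_sub_rel_zero] at hfg hgh ⊢
        simpa using stableRel_zero_add hsum hfg hgh }
  comp_left f := fun h => by
    rw [stableRel_iff_sub_rel_zero] at h ⊢
    simpa using stableRel_zero_comp_left f h
  comp_right g h := by
    rw [stableRel_iff_sub_rel_zero] at h ⊢
    simpa using stableRel_zero_comp_right h g

lemma isKernelModulo_stableRel_of_isPullback {X₁ X₀ A B D : 𝒜} {k : X₁ ⟶ X₀}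
    {p : X₀ ⟶ B} {w : k ≫ p = 0} (hk : IsLimit (KernelFork.ofι k w)) (hX₁ : P X₁)
    (hX₀ : P X₀) (hp : XEpic P p) {f : A ⟶ B} {g' : D ⟶ A} {b : D ⟶ X₀}
    (hpb : IsPullback g' b f p) : (stableRel P).IsKernelModulo f g' where
  comp_rel_zero := hpb.w ▸ stableRel_comp_zero hX₀ b p
  exists_lift W g := by
    rintro ⟨X, hX, v, u, e⟩
    obtain ⟨t, rfl⟩ := hp X hX u
    refine ⟨hpb.lift g (v ≫ t) (by simpa using e), ?_⟩
    rw [hpb.lift_fst]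
    exact stableRel_refl_of_mem hX₀ g
  rel_zero_of_comp W h := by
    rintro ⟨X, hX, v, u, e⟩
    obtain ⟨t, rfl⟩ := hpb.xEpic_fst hp X hX u
    have : stableRel P (h - v ≫ t) 0 :=
      stableRel_zero_of_comp_eq_zero_of_isPullback hk hX₁ hpb (by simpa [sub_eq_zero] using e)
    simpa using stableRel_zero_add hsum this (stableRel_comp_zero hX v t)

lemma isCokernelModulo_stableRel_of_isPushout {A B X₀ X₁ Q : 𝒜} {i : A ⟶ X₀}
    {c : X₀ ⟶ X₁} {w : i ≫ c = 0} (hc : IsColimit (CokernelCofork.ofπ c w)) (hX₁ : P X₁)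
    (hX₀ : P X₀) (hi : XMonic P i) {f : A ⟶ B} {b : X₀ ⟶ Q} {j : B ⟶ Q}
    (hpo : IsPushout i f b j) : (stableRel P).IsCokernelModulo f j where
  comp_rel_zero := hpo.w ▸ stableRel_comp_zero hX₀ i b
  exists_desc T g := by
    rintro ⟨X, hX, v, u, e⟩
    obtain ⟨t, rfl⟩ := hi X hX v
    refine ⟨hpo.desc (t ≫ u) g (by simpa using e.symm), ?_⟩
    rw [hpo.inr_desc]
    exact stableRel_refl_of_mem hX₀ g
  rel_zero_of_comp T h := by
    rintro ⟨X, hX, v, u, e⟩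
    obtain ⟨t, rfl⟩ := hpo.xMonic_inr hi X hX v
    have : stableRel P (h - t ≫ u) 0 :=
      stableRel_zero_of_comp_eq_zero_of_isPushout hc hX₁ hpo (by simpa [sub_eq_zero] using e)
    simpa using stableRel_zero_add hsum this (stableRel_comp_zero hX t u)

end StableRel

theorem stmt_13 {𝒜 : Type u} [Category.{v} 𝒜] [Preadditive 𝒜]
    [HasBinaryBiproducts 𝒜]
    (E : ExactStructure 𝒜) (P : 𝒜 → Prop)
    (hsum : ∀ X Y : 𝒜, P X → P Y → P (X ⊞ Y))
    -- every object has an `X`-precover which is a deflation with kernel in `X`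
    (hcover : ∀ A : 𝒜, ∃ (X₁ X₀ : 𝒜) (i : X₁ ⟶ X₀) (p : X₀ ⟶ A),
      E.IsConflation i p ∧ P X₁ ∧ P X₀ ∧ XEpic P p)
    -- every object has an `X`-preenvelope which is an inflation with cokernel in `X`
    (henv : ∀ A : 𝒜, ∃ (X₀ X₁ : 𝒜) (i : A ⟶ X₀) (p : X₀ ⟶ X₁),
      E.IsConflation i p ∧ P X₀ ∧ P X₁ ∧ XMonic P i) :
    Nonempty ((inst : Preadditive (Quotient (stableRel P))) ×'
      (@Functor.Additive 𝒜 (Quotient (stableRel P)) _ _ _ inst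
          (Quotient.functor (stableRel P)) ∧
        @HasKernels (Quotient (stableRel P)) _
          (@Preadditive.preadditiveHasZeroMorphisms _ _ inst) ∧
        @HasCokernels (Quotient (stableRel P)) _
          (@Preadditive.preadditiveHasZeroMorphisms _ _ inst))) := by
  have hP : 𝒜 → ∃ X, P X := fun A => by
    obtain ⟨X₁, -, -, -, -, hX₁, -⟩ := hcover A
    exact ⟨X₁, hX₁⟩
  have := congruence_stableRel hsum hP
  have hr := stableRel_isAdditive hsum
  let inst := Quotient.preadditive _ hr
  refine ⟨⟨inst, Quotient.functor_additive _ hr, ⟨fun {X Y} φ => ?_⟩, ⟨fun {X Y} φ => ?_⟩⟩⟩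
  all_goals obtain ⟨f, rfl⟩ := (Quotient.functor _).map_surjective (X := X.as) (Y := Y.as) φ
  · obtain ⟨X₁, X₀, k, p, hkp, hX₁, hX₀, hp⟩ := hcover Y.as
    obtain ⟨D, g', b, hpb, -⟩ := E.pullback p f ⟨X₁, k, hkp⟩
    exact Quotient.hasKernel_functor_map hr <| isKernelModulo_stableRel_of_isPullback hsum
      (E.isKernel k p hkp).some hX₁ hX₀ hp hpb
  · obtain ⟨X₀, X₁, i, c, hic, hX₀, hX₁, hi⟩ := henv X.as
    obtain ⟨Q, j, b, hpo, -⟩ := E.pushout i f ⟨X₁, c, hic⟩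
    exact Quotient.hasCokernel_functor_map hr <| isCokernelModulo_stableRel_of_isPushout hsum
      (E.isCokernel i c hic).some hX₁ hX₀ hi hpo
end

section
/- Let (T, [1]) be a triangulated category and X a full additive subcategory such that for each A ∈ T there are distinguished triangles A[-1] → X₁ → X₀ →p A with p an X-precover and X₁ ∈ X, and A →i X⁰ → X¹ → A[1] with i an X-preenvelope and X¹ ∈ X. Suppose furthermore that for every distinguished triangle A →f B →g C → A[1]: if the class of g is an epimorphism in T/X then f is X-monic, and if the class of f is a monomorphism in T/X then g is X-epic. Then the stable category T/X is an abelian category. -/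
open CategoryTheory CategoryTheory.Limits CategoryTheory.Pretriangulated

universe v u

/-!
A morphism `u : Y ⟶ A` vanishes in `T/X` iff it factors through an `X`-precover `p : X₀ ⟶ A`,
i.e. iff it is killed by the third map `A ⟶ X₁[1]` of the precover triangle; dually with
preenvelopes. Hence, for a distinguished triangle `A ⟶ B ⟶ C ⟶ A[1]`, if `A ⟶ B` is `X`-monic
then `B ⟶ C` becomes a cokernel of `A ⟶ B` in `T/X`, and if `B ⟶ C` is `X`-epic then `A ⟶ B`
becomes a kernel of `B ⟶ C`. Up to the isomorphism `A ≅ A ⊞ X₀` of `T/X`, any `f : A ⟶ B` is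
the `X`-epic map `[f, p]`, whose cocone triangle provides a kernel; dually `(f, i)` provides a
cokernel. When `f` is an epimorphism of `T/X`, condition (b) makes the fibre map of `[f, p]`
`X`-monic, so `[f, p]` is its cokernel and `f` is a normal epimorphism; dually for monomorphisms.
-/

namespace CategoryTheory.Pretriangulated

variable {C : Type*} [Category C] [Preadditive C] [HasZeroObject C] [HasShift C ℤ]
  [∀ n : ℤ, (CategoryTheory.shiftFunctor C n).Additive] [Pretriangulated C]

lemma Triangle.yoneda_exact₁ (T : Triangle C) (hT : T ∈ distTriang C) {X : C} (f : T.obj₁ ⟶ X)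
    (hf : T.mor₃ ≫ f⟦(1 : ℤ)⟧' = 0) : ∃ g : T.obj₂ ⟶ X, f = T.mor₁ ≫ g := by
  obtain ⟨g, hg⟩ := Triangle.yoneda_exact₃ _ (rot_of_distTriang _ hT) (f⟦(1 : ℤ)⟧') hf
  obtain ⟨g, rfl⟩ := (CategoryTheory.shiftFunctor C (1 : ℤ)).map_surjective (X := T.obj₂) g
  refine ⟨-g, (CategoryTheory.shiftFunctor C (1 : ℤ)).map_injective ?_⟩
  rw [Functor.map_comp, Functor.map_neg, Preadditive.comp_neg, hg]
  exact Preadditive.neg_comp _ _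

end CategoryTheory.Pretriangulated

namespace CategoryTheory.Limits

variable {C : Type*} [Category C] [HasZeroMorphisms C]

lemma NormalEpi.nonempty_isIso_comp {X Y Z : C} (e : X ⟶ Y) [IsIso e] {g : Y ⟶ Z}
    (hg : NormalEpi g) : Nonempty (NormalEpi (e ≫ g)) :=
  ⟨hg.ofArrowIso (Arrow.isoMk (asIso e).symm (Iso.refl _))⟩

lemma NormalMono.nonempty_comp_isIso {X Y Z : C} {g : X ⟶ Y} (hg : NormalMono g) (e : Y ⟶ Z)
    [IsIso e] : Nonempty (NormalMono (g ≫ e)) :=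
  ⟨hg.ofArrowIso (Arrow.isoMk (Iso.refl _) (asIso e))⟩

end CategoryTheory.Limits

namespace StableCategory

section Quotient

variable {T : Type u} [Category.{v} T] [Preadditive T] (P : T → Prop)
  [Congruence (stableRel P)] [Preadditive (Quotient (stableRel P))]
  [(Quotient.functor (stableRel P)).Additive]

local notation "π" => Quotient.functor (stableRel P)

lemma map_eq_zero_iff {A B : T} (f : A ⟶ B) :
    (π).map f = 0 ↔ ∃ M, P M ∧ ∃ (v : A ⟶ M) (u : M ⟶ B), f = v ≫ u := by
  rw [← (π).map_zero, Quotient.functor_map_eq_iff]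
  simp only [stableRel, sub_zero]

variable {P}

lemma map_eq_zero_iff_of_xEpic {A B X₀ : T} {p : X₀ ⟶ B} (hX₀ : P X₀) (hp : XEpic P p)
    (u : A ⟶ B) : (π).map u = 0 ↔ ∃ c : A ⟶ X₀, u = c ≫ p := by
  rw [map_eq_zero_iff]
  constructor
  · rintro ⟨M, hM, v, w, rfl⟩
    obtain ⟨t, rfl⟩ := hp M hM w
    exact ⟨v ≫ t, by simp⟩
  · rintro ⟨c, rfl⟩
    exact ⟨X₀, hX₀, c, p, rfl⟩

lemma map_eq_zero_iff_of_xMonic {A B X₀ : T} {i : A ⟶ X₀} (hX₀ : P X₀) (hi : XMonic P i)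
    (u : A ⟶ B) : (π).map u = 0 ↔ ∃ c : X₀ ⟶ B, u = i ≫ c := by
  rw [map_eq_zero_iff]
  constructor
  · rintro ⟨M, hM, v, w, rfl⟩
    obtain ⟨t, rfl⟩ := hi M hM v
    exact ⟨t ≫ w, by simp⟩
  · rintro ⟨c, rfl⟩
    exact ⟨X₀, hX₀, i, c, rfl⟩

end Quotient

section Biproducts

variable {T : Type u} [Category.{v} T] [Preadditive T] [HasBinaryBiproducts T] {P : T → Prop}

lemma xEpic_biprod_desc {A B X₀ : T} {p : X₀ ⟶ B} (hp : XEpic P p) (f : A ⟶ B) :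
    XEpic P (biprod.desc f p) := fun X' hX' x => by
  obtain ⟨t, rfl⟩ := hp X' hX' x
  exact ⟨t ≫ biprod.inr, by simp⟩

lemma xMonic_biprod_lift {A B X₀ : T} {i : A ⟶ X₀} (hi : XMonic P i) (f : A ⟶ B) :
    XMonic P (biprod.lift f i) := fun X' hX' x => by
  obtain ⟨t, rfl⟩ := hi X' hX' x
  exact ⟨biprod.snd ≫ t, by simp⟩

lemma stableRel_add (hsum : ∀ X Y : T, P X → P Y → P (X ⊞ Y)) ⦃A B : T⦄
    (f₁ f₂ g₁ g₂ : A ⟶ B) (hf : stableRel P f₁ f₂) (hg : stableRel P g₁ g₂) :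
    stableRel P (f₁ + g₁) (f₂ + g₂) := by
  obtain ⟨M, hM, v, u, huv⟩ := hf
  obtain ⟨N, hN, v', u', huv'⟩ := hg
  refine ⟨M ⊞ N, hsum _ _ hM hN, biprod.lift v v', biprod.desc u u', ?_⟩
  rw [biprod.lift_desc, ← huv, ← huv']
  abel

lemma congruence_stableRel (hne : ∃ Z, P Z) (hsum : ∀ X Y : T, P X → P Y → P (X ⊞ Y)) :
    Congruence (stableRel P) where
  equivalence := by
    obtain ⟨Z, hZ⟩ := hne
    refine ⟨fun _ => ⟨Z, hZ, 0, 0, by simp⟩, ?_, ?_⟩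
    · rintro f g ⟨M, hM, v, u, huv⟩
      exact ⟨M, hM, -v, u, by rw [Preadditive.neg_comp, ← huv, neg_sub]⟩
    · intro f g h hfg hgh
      obtain ⟨M, hM, v, u, huv⟩ := stableRel_add hsum _ _ _ _ hfg hgh
      exact ⟨M, hM, v, u, by rw [← huv]; abel⟩
  comp_left := by
    rintro _ _ _ f g g' ⟨M, hM, v, u, huv⟩
    exact ⟨M, hM, f ≫ v, u, by rw [← Preadditive.comp_sub, huv, Category.assoc]⟩
  comp_right := by
    rintro _ _ _ f f' g ⟨M, hM, v, u, huv⟩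
    exact ⟨M, hM, v, u ≫ g, by rw [← Preadditive.sub_comp, huv, Category.assoc]⟩

variable [Congruence (stableRel P)] [Preadditive (Quotient (stableRel P))]
  [(Quotient.functor (stableRel P)).Additive]

local notation "π" => Quotient.functor (stableRel P)

lemma isIso_map_biprod_inl {A X₀ : T} (hX₀ : P X₀) :
    IsIso ((π).map (biprod.inl : A ⟶ A ⊞ X₀)) := by
  refine ⟨(π).map biprod.fst, by rw [← (π).map_comp, biprod.inl_fst, (π).map_id], ?_⟩
  rw [← (π).map_comp, ← (π).map_id, ← sub_eq_zero, ← (π).map_sub, map_eq_zero_iff]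
  exact ⟨X₀, hX₀, -biprod.snd, biprod.inr, by rw [← biprod.total, Preadditive.neg_comp]; abel⟩

lemma isIso_map_biprod_fst {A X₀ : T} (hX₀ : P X₀) :
    IsIso ((π).map (biprod.fst : A ⊞ X₀ ⟶ A)) := by
  have := isIso_map_biprod_inl (A := A) hX₀
  have : IsIso ((π).map biprod.inl ≫ (π).map (biprod.fst : A ⊞ X₀ ⟶ A)) := by
    rw [← (π).map_comp, biprod.inl_fst, (π).map_id]
    infer_instance
  exact IsIso.of_isIso_comp_left ((π).map biprod.inl) _

lemma exists_isIso_map_comp_xEpic {A B X₀ : T} {p : X₀ ⟶ B} (hX₀ : P X₀) (hp : XEpic P p)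
    (f : A ⟶ B) : ∃ (A' : T) (i : A ⟶ A') (g : A' ⟶ B),
      IsIso ((π).map i) ∧ XEpic P g ∧ i ≫ g = f :=
  ⟨_, biprod.inl, biprod.desc f p, isIso_map_biprod_inl hX₀, xEpic_biprod_desc hp f,
    biprod.inl_desc f p⟩

lemma exists_xMonic_comp_isIso_map {A B X₀ : T} {i : A ⟶ X₀} (hX₀ : P X₀) (hi : XMonic P i)
    (f : A ⟶ B) : ∃ (B' : T) (g : A ⟶ B') (j : B' ⟶ B),
      XMonic P g ∧ IsIso ((π).map j) ∧ g ≫ j = f :=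
  ⟨_, biprod.lift f i, biprod.fst, xMonic_biprod_lift hi f, isIso_map_biprod_fst hX₀,
    biprod.lift_fst f i⟩

end Biproducts

section Triangulated

variable {T : Type u} [Category.{v} T] [Preadditive T] [HasZeroObject T]
  [HasShift T ℤ] [∀ n : ℤ, (shiftFunctor T n).Additive] [Pretriangulated T]
  {P : T → Prop} [Congruence (stableRel P)] [Preadditive (Quotient (stableRel P))]
  [(Quotient.functor (stableRel P)).Additive]

local notation "π" => Quotient.functor (stableRel P)

variable (P) in
def HasPrecoverTriangles : Prop :=
  ∀ A : T, ∃ (X₁ X₀ : T) (u : X₁ ⟶ X₀) (p : X₀ ⟶ A) (w : A ⟶ X₁⟦(1 : ℤ)⟧),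
    Triangle.mk u p w ∈ distTriang T ∧ P X₁ ∧ P X₀ ∧ XEpic P p

variable (P) in
def HasPreenvelopeTriangles : Prop :=
  ∀ A : T, ∃ (X₀ X₁ : T) (i : A ⟶ X₀) (q : X₀ ⟶ X₁) (w : X₁ ⟶ A⟦(1 : ℤ)⟧),
    Triangle.mk i q w ∈ distTriang T ∧ P X₀ ∧ P X₁ ∧ XMonic P i

lemma map_eq_zero_iff_comp_mor₃_eq_zero_of_xEpic {X₁ X₀ A Y : T} {u₀ : X₁ ⟶ X₀} {p : X₀ ⟶ A}
    {w : A ⟶ X₁⟦(1 : ℤ)⟧} (hT : Triangle.mk u₀ p w ∈ distTriang T) (hX₀ : P X₀)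
    (hp : XEpic P p) (u : Y ⟶ A) : (π).map u = 0 ↔ u ≫ w = 0 := by
  rw [map_eq_zero_iff_of_xEpic hX₀ hp]
  constructor
  · rintro ⟨c, rfl⟩
    rw [Category.assoc, show p ≫ w = 0 from comp_distTriang_mor_zero₂₃ _ hT, comp_zero]
  · exact Triangle.coyoneda_exact₃ _ hT u

lemma map_eq_zero_iff_mor₃_comp_eq_zero_of_xMonic {A X₀ X₁ Y : T} {i : A ⟶ X₀} {q : X₀ ⟶ X₁}
    {w : X₁ ⟶ A⟦(1 : ℤ)⟧} (hT : Triangle.mk i q w ∈ distTriang T) (hX₀ : P X₀)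
    (hi : XMonic P i) (u : A ⟶ Y) : (π).map u = 0 ↔ w ≫ u⟦(1 : ℤ)⟧' = 0 := by
  rw [map_eq_zero_iff_of_xMonic hX₀ hi]
  constructor
  · rintro ⟨c, rfl⟩
    rw [Functor.map_comp, ← Category.assoc,
      show w ≫ i⟦(1 : ℤ)⟧' = 0 from comp_distTriang_mor_zero₃₁ _ hT, zero_comp]
  · exact Triangle.yoneda_exact₁ _ hT u

lemma map_comp_map_eq_zero_of_distTriang {D : Type*} [Category D] [HasZeroMorphisms D]
    (F : T ⥤ D) [F.PreservesZeroMorphisms] {A B C : T} {f : A ⟶ B} {g : B ⟶ C}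
    {h : C ⟶ A⟦(1 : ℤ)⟧} (hT : Triangle.mk f g h ∈ distTriang T) : F.map f ≫ F.map g = 0 := by
  rw [← F.map_comp, show f ≫ g = 0 from comp_distTriang_mor_zero₁₂ _ hT, F.map_zero]

lemma epi_map_of_xMonic
    (hcover : HasPrecoverTriangles P)
    {A B C : T} {f : A ⟶ B} {g : B ⟶ C} {h : C ⟶ A⟦(1 : ℤ)⟧}
    (hT : Triangle.mk f g h ∈ distTriang T) (hf : XMonic P f) : Epi ((π).map g) := by
  refine Preadditive.epi_of_cancel_zero _ fun {R} u hu => ?_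
  obtain ⟨u, rfl⟩ := (π).map_surjective (X := C) (Y := R.as) u
  obtain ⟨X₁, X₀, u₀, p, w, hTR, hX₁, hX₀, hp⟩ := hcover R.as
  rw [← (π).map_comp] at hu
  simp only [map_eq_zero_iff_comp_mor₃_eq_zero_of_xEpic hTR hX₀ hp, Category.assoc] at hu ⊢
  obtain ⟨σ, hσ⟩ : ∃ σ : A⟦(1 : ℤ)⟧ ⟶ X₁⟦(1 : ℤ)⟧, u ≫ w = h ≫ σ :=
    Triangle.yoneda_exact₃ _ hT (u ≫ w) hu
  obtain ⟨x, rfl⟩ := (shiftFunctor T (1 : ℤ)).map_surjective (X := A) σ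
  obtain ⟨t, rfl⟩ := hf X₁ hX₁ x
  rw [hσ, Functor.map_comp, ← Category.assoc,
    show h ≫ f⟦(1 : ℤ)⟧' = 0 from comp_distTriang_mor_zero₃₁ _ hT, zero_comp]

lemma mono_map_of_xEpic
    (henv : HasPreenvelopeTriangles P)
    {A B C : T} {f : A ⟶ B} {g : B ⟶ C} {h : C ⟶ A⟦(1 : ℤ)⟧}
    (hT : Triangle.mk f g h ∈ distTriang T) (hg : XEpic P g) : Mono ((π).map f) := by
  refine Preadditive.mono_of_cancel_zero _ fun {R} u hu => ?_
  obtain ⟨u, rfl⟩ := (π).map_surjective (X := R.as) (Y := A) u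
  obtain ⟨X₀, X₁, i, q, w, hTR, hX₀, hX₁, hi⟩ := henv R.as
  rw [← (π).map_comp] at hu
  simp only [map_eq_zero_iff_mor₃_comp_eq_zero_of_xMonic hTR hX₀ hi] at hu ⊢
  rw [Functor.map_comp, ← Category.assoc] at hu
  obtain ⟨y, hy⟩ : ∃ y : X₁ ⟶ C, w ≫ u⟦(1 : ℤ)⟧' = y ≫ h :=
    Triangle.coyoneda_exact₁ _ hT (w ≫ u⟦(1 : ℤ)⟧') hu
  obtain ⟨t, rfl⟩ := hg X₁ hX₁ y
  rw [hy, Category.assoc, show g ≫ h = 0 from comp_distTriang_mor_zero₂₃ _ hT, comp_zero]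

lemma nonempty_isColimit_of_xMonic
    (hcover : HasPrecoverTriangles P)
    {A B C : T} {f : A ⟶ B} {g : B ⟶ C} {h : C ⟶ A⟦(1 : ℤ)⟧}
    (hT : Triangle.mk f g h ∈ distTriang T) (hf : XMonic P f) :
    Nonempty (IsColimit (CokernelCofork.ofπ ((π).map g) (map_comp_map_eq_zero_of_distTriang π hT))) := by
  have := epi_map_of_xMonic hcover hT hf
  have hdesc : ∀ {R} (k : (π).obj B ⟶ R), (π).map f ≫ k = 0 → ∃ l, (π).map g ≫ l = k := by
    intro R k hk
    obtain ⟨k, rfl⟩ := (π).map_surjective (X := B) (Y := R.as) k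
    rw [← (π).map_comp, map_eq_zero_iff] at hk
    obtain ⟨M, hM, v, u, huv⟩ := hk
    obtain ⟨v, rfl⟩ := hf M hM v
    obtain ⟨l, hl⟩ : ∃ l : C ⟶ R.as, k - v ≫ u = g ≫ l :=
      Triangle.yoneda_exact₂ _ hT (k - v ≫ u)
        (show f ≫ (k - v ≫ u) = 0 by rw [Preadditive.comp_sub, huv, Category.assoc, sub_self])
    refine ⟨(π).map l, ?_⟩
    rw [← (π).map_comp, ← hl, (π).map_sub, sub_eq_self, map_eq_zero_iff]
    exact ⟨M, hM, v, u, rfl⟩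
  exact ⟨CokernelCofork.IsColimit.ofπ' _ _ fun k hk =>
    Classical.indefiniteDescription _ (hdesc k hk)⟩

lemma nonempty_isLimit_of_xEpic
    (henv : HasPreenvelopeTriangles P)
    {A B C : T} {f : A ⟶ B} {g : B ⟶ C} {h : C ⟶ A⟦(1 : ℤ)⟧}
    (hT : Triangle.mk f g h ∈ distTriang T) (hg : XEpic P g) :
    Nonempty (IsLimit (KernelFork.ofι ((π).map f) (map_comp_map_eq_zero_of_distTriang π hT))) := by
  have := mono_map_of_xEpic henv hT hg
  have hlift : ∀ {R} (k : R ⟶ (π).obj B), k ≫ (π).map g = 0 → ∃ l, l ≫ (π).map f = k := by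
    intro R k hk
    obtain ⟨k, rfl⟩ := (π).map_surjective (X := R.as) (Y := B) k
    rw [← (π).map_comp, map_eq_zero_iff] at hk
    obtain ⟨M, hM, v, u, huv⟩ := hk
    obtain ⟨u, rfl⟩ := hg M hM u
    obtain ⟨l, hl⟩ : ∃ l : R.as ⟶ A, k - v ≫ u = l ≫ f :=
      Triangle.coyoneda_exact₂ _ hT (k - v ≫ u)
        (show (k - v ≫ u) ≫ g = 0 by rw [Preadditive.sub_comp, huv, Category.assoc, sub_self])
    refine ⟨(π).map l, ?_⟩
    rw [← (π).map_comp, ← hl, (π).map_sub, sub_eq_self, map_eq_zero_iff]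
    exact ⟨M, hM, v, u, rfl⟩
  exact ⟨KernelFork.IsLimit.ofι' _ _ fun k hk =>
    Classical.indefiniteDescription _ (hlift k hk)⟩

end Triangulated

section Abelian

variable {T : Type u} [Category.{v} T] [Preadditive T] [HasZeroObject T]
  [HasShift T ℤ] [∀ n : ℤ, (shiftFunctor T n).Additive] [Pretriangulated T]
  [HasBinaryBiproducts T] {P : T → Prop} [Congruence (stableRel P)]
  [Preadditive (Quotient (stableRel P))] [(Quotient.functor (stableRel P)).Additive]

local notation "π" => Quotient.functor (stableRel P)

lemma hasKernel_map
    (hcover : HasPrecoverTriangles P) (henv : HasPreenvelopeTriangles P)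
    {A B : T} (f : A ⟶ B) : HasKernel ((π).map f) := by
  obtain ⟨-, X₀, -, p, -, -, -, hX₀, hp⟩ := hcover B
  obtain ⟨A', i, g, hi, hg, rfl⟩ := exists_isIso_map_comp_xEpic hX₀ hp f
  obtain ⟨K, κ, δ, hT⟩ := distinguished_cocone_triangle₁ g
  obtain ⟨hlim⟩ := nonempty_isLimit_of_xEpic henv hT hg
  have : HasKernel ((π).map g) := HasLimit.mk ⟨_, hlim⟩
  rw [(π).map_comp]
  infer_instance

lemma hasCokernel_map
    (hcover : HasPrecoverTriangles P) (henv : HasPreenvelopeTriangles P)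
    {A B : T} (f : A ⟶ B) : HasCokernel ((π).map f) := by
  obtain ⟨X₀, -, i, -, -, -, hX₀, -, hi⟩ := henv A
  obtain ⟨B', g, j, hg, hj, rfl⟩ := exists_xMonic_comp_isIso_map hX₀ hi f
  obtain ⟨C, c, δ, hT⟩ := distinguished_cocone_triangle g
  obtain ⟨hcolim⟩ := nonempty_isColimit_of_xMonic hcover hT hg
  have : HasCokernel ((π).map g) := HasColimit.mk ⟨_, hcolim⟩
  rw [(π).map_comp]
  infer_instance

lemma nonempty_normalEpi_map
    (hcover : HasPrecoverTriangles P)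
    (hb : ∀ (A B C : T) (f : A ⟶ B) (g : B ⟶ C) (h : C ⟶ A⟦(1 : ℤ)⟧),
      Triangle.mk f g h ∈ (distTriang T) → Epi ((π).map g) → XMonic P f)
    {A B : T} (f : A ⟶ B) (hf : Epi ((π).map f)) : Nonempty (NormalEpi ((π).map f)) := by
  obtain ⟨-, X₀, -, p, -, -, -, hX₀, hp⟩ := hcover B
  obtain ⟨A', i, g, hi, hg, rfl⟩ := exists_isIso_map_comp_xEpic hX₀ hp f
  obtain ⟨K, κ, δ, hT⟩ := distinguished_cocone_triangle₁ g
  rw [(π).map_comp] at hf ⊢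
  have := epi_of_epi ((π).map i) ((π).map g)
  obtain ⟨hcolim⟩ := nonempty_isColimit_of_xMonic hcover hT (hb _ _ _ _ _ _ hT this)
  exact NormalEpi.nonempty_isIso_comp _ ⟨_, _, _, hcolim⟩

lemma nonempty_normalMono_map
    (henv : HasPreenvelopeTriangles P)
    (hb : ∀ (A B C : T) (f : A ⟶ B) (g : B ⟶ C) (h : C ⟶ A⟦(1 : ℤ)⟧),
      Triangle.mk f g h ∈ (distTriang T) → Mono ((π).map f) → XEpic P g)
    {A B : T} (f : A ⟶ B) (hf : Mono ((π).map f)) : Nonempty (NormalMono ((π).map f)) := by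
  obtain ⟨X₀, -, i, -, -, -, hX₀, -, hi⟩ := henv A
  obtain ⟨B', g, j, hg, hj, rfl⟩ := exists_xMonic_comp_isIso_map hX₀ hi f
  obtain ⟨C, c, δ, hT⟩ := distinguished_cocone_triangle g
  rw [(π).map_comp] at hf ⊢
  have := mono_of_mono ((π).map g) ((π).map j)
  obtain ⟨hlim⟩ := nonempty_isLimit_of_xEpic henv hT (hb _ _ _ _ _ _ hT this)
  exact NormalMono.nonempty_comp_isIso ⟨_, _, _, hlim⟩ _

end Abelian

end StableCategory

theorem stmt_15 {T : Type u} [Category.{v} T] [Preadditive T] [HasZeroObject T]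
    [HasShift T ℤ] [∀ n : ℤ, (shiftFunctor T n).Additive] [Pretriangulated T]
    [HasBinaryBiproducts T]
    (P : T → Prop) (hne : ∃ Z, P Z)
    (hsum : ∀ X Y : T, P X → P Y → P (X ⊞ Y))
    -- condition (a), precovers:
    (hcover : ∀ A : T, ∃ (X₁ X₀ : T) (u : X₁ ⟶ X₀) (p : X₀ ⟶ A)
      (w : A ⟶ X₁⟦(1 : ℤ)⟧), Triangle.mk u p w ∈ (distTriang T) ∧
        P X₁ ∧ P X₀ ∧ XEpic P p)
    -- condition (a), preenvelopes:
    (henv : ∀ A : T, ∃ (X₀ X₁ : T) (i : A ⟶ X₀) (q : X₀ ⟶ X₁)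
      (w : X₁ ⟶ A⟦(1 : ℤ)⟧), Triangle.mk i q w ∈ (distTriang T) ∧
        P X₀ ∧ P X₁ ∧ XMonic P i)
    -- condition (b):
    (hb : ∀ (A B C : T) (f : A ⟶ B) (g : B ⟶ C) (h : C ⟶ A⟦(1 : ℤ)⟧),
      Triangle.mk f g h ∈ (distTriang T) →
        (Epi ((Quotient.functor (stableRel P)).map g) → XMonic P f) ∧
        (Mono ((Quotient.functor (stableRel P)).map f) → XEpic P g)) :
    Nonempty ((inst : Abelian (Quotient (stableRel P))) ×'
      @Functor.Additive T (Quotient (stableRel P)) _ _ _ inst.toPreadditive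
        (Quotient.functor (stableRel P))) := by
  open StableCategory in
  have := congruence_stableRel hne hsum
  let : Preadditive (Quotient (stableRel P)) := Quotient.preadditive _ (stableRel_add hsum)
  have hadd := Quotient.functor_additive _ (stableRel_add hsum)
  have := (Quotient.functor (stableRel P)).hasFiniteProducts_of_additive_of_essSurj
  have : HasKernels (Quotient (stableRel P)) :=
    ⟨fun φ => by
      obtain ⟨f, rfl⟩ := (Quotient.functor _).map_surjective φ
      exact hasKernel_map hcover henv f⟩
  have : HasCokernels (Quotient (stableRel P)) :=
    ⟨fun φ => by
      obtain ⟨f, rfl⟩ := (Quotient.functor _).map_surjective φ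
      exact hasCokernel_map hcover henv f⟩
  refine ⟨⟨{ normalMonoOfMono := fun φ hφ => ?_, normalEpiOfEpi := fun φ hφ => ?_ }, hadd⟩⟩
  · obtain ⟨f, rfl⟩ := (Quotient.functor _).map_surjective φ
    exact nonempty_normalMono_map henv (fun _ _ _ _ _ _ hT => (hb _ _ _ _ _ _ hT).2) f hφ
  · obtain ⟨f, rfl⟩ := (Quotient.functor _).map_surjective φ
    exact nonempty_normalEpi_map hcover (fun _ _ _ _ _ _ hT => (hb _ _ _ _ _ _ hT).1) f hφ
end
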